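/- arXiv:2511.08701 — 2 statements merged into one kernel-verified Lean document; each statement's English description precedes it below -/
import Mathlib

section
/- Let 0 < α < 1, μ ∈ (πα/2, πα), and let C₀ > 0 be a constant such that |E_{α,1}(−i λ w^α)| ≤ C₀/(1 + λ|w|^α) for all λ ≥ 0 and all w ∈ ℂ \ {0} with μ ≤ |arg(−i w^α)| ≤ π. Let H be a complex Hilbert space, (φ_n)_{n∈ℕ} an orthonormal family in H, (λ_n)_{n∈ℕ} nonnegative reals, and (c_n)_{n∈ℕ} complex numbers with Σ_n |c_n|² < ∞. Then for every z in the sector Σ = {z ∈ ℂ \ {0} : max(−π, (μ − 3π/2)/α) ≤ arg z ≤ min(π, (π/2 − μ)/α)}, the series y(z) = Σ_{n=1}^∞ c_n E_{α,1}(−i λ_n z^α) φ_n converges in H and satisfies ‖y(z)‖_H ≤ C₀ (Σ_n |c_n|²)^{1/2}; moreover, y is analytic on the open sector {z ∈ ℂ \ {0} : max(−π, (μ − 3π/2)/α) < arg z < min(π, (π/2 − μ)/α)}. -/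
/-!
On the closed sector the phase `a arg z - π / 2` of `-i z ^ a` lies in `[μ - 2π, -μ]`, so the
hypothesis on `E_{a,1}` applies and bounds every coefficient `c_n E_{a,1}(-i λ_n z ^ a)` by
`C₀ |c_n|`. By orthonormality the series is then dominated in `ℓ²` uniformly in `z`: this gives
convergence and the norm bound, and makes the partial sums converge uniformly on the sector.
Each term is holomorphic off the branch cut, `E_{a,1}` being entire because `Γ (a k + 1)`
outgrows every geometric sequence, so the sum is holomorphic on the open sector.
-/

/-- The Mittag-Leffler function `E_{α,β}(w) = ∑_{k=0}^∞ w^k / Γ(αk + β)`. -/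
noncomputable def mittagLeffler (a b : ℝ) (w : ℂ) : ℂ :=
  ∑' k : ℕ, w ^ k / (Real.Gamma (a * k + b) : ℂ)

open Complex Filter MeasureTheory Real Set

theorem Real.rpow_mul_exp_neg_le_Gamma_add_one {T s : ℝ} (hT : 0 ≤ T) (hs : 0 ≤ s) :
    T ^ s * Real.exp (-(T + 1)) ≤ Real.Gamma (s + 1) := by
  have hint : IntegrableOn (fun x => Real.exp (-x) * x ^ s) (Ioi 0) := by
    simpa using Real.GammaIntegral_convergent (s := s + 1) (by linarith)
  have hsub : Ioc T (T + 1) ⊆ Ioi 0 := fun x hx => hT.trans_lt hx.1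
  rw [Real.Gamma_eq_integral (by linarith), add_sub_cancel_right]
  calc T ^ s * Real.exp (-(T + 1))
      = (Real.exp (-(T + 1)) * T ^ s) * volume.real (Ioc T (T + 1)) := by
        rw [Real.volume_real_Ioc_of_le (by linarith), add_sub_cancel_left, mul_one, mul_comm]
    _ ≤ ∫ x in Ioc T (T + 1), Real.exp (-x) * x ^ s := by
      refine setIntegral_ge_of_const_le_real measurableSet_Ioc measure_Ioc_lt_top.ne
        (fun x hx => ?_) (hint.mono_set hsub)
      gcongr
      · exact hx.2
      · exact hx.1.le
    _ ≤ ∫ x in Ioi 0, Real.exp (-x) * x ^ s :=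
      setIntegral_mono_set hint (ae_restrict_of_forall_mem measurableSet_Ioi fun x hx =>
        mul_nonneg (Real.exp_pos _).le (Real.rpow_nonneg (le_of_lt hx) _))
        (Eventually.of_forall hsub)

theorem Real.summable_pow_div_Gamma {a b : ℝ} (ha : 0 < a) (hb : 1 ≤ b) {R : ℝ}
    (hR : 0 ≤ R) : Summable fun k : ℕ => R ^ k / Real.Gamma (a * k + b) := by
  -- With `T ^ a = 2 R + 1`, the bound `T ^ (a k) e^{-(T+1)} ≤ Γ (a k + b)` beats `R ^ k`
  -- by the factor `(R / (2 R + 1)) ^ k`.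
  obtain ⟨T, hT, hTk⟩ : ∃ T : ℝ, 1 ≤ T ∧ ∀ k : ℕ, T ^ (a * k) = (2 * R + 1) ^ k := by
    refine ⟨(2 * R + 1) ^ a⁻¹, Real.one_le_rpow (by linarith) (by positivity), fun k => ?_⟩
    rw [← Real.rpow_natCast, ← Real.rpow_mul (by positivity), inv_mul_cancel_left₀ ha.ne']
  have hGamma (k : ℕ) : (2 * R + 1) ^ k * Real.exp (-(T + 1)) ≤ Real.Gamma (a * k + b) :=
    calc (2 * R + 1) ^ k * Real.exp (-(T + 1))
        ≤ T ^ (a * k + b - 1) * Real.exp (-(T + 1)) := by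
          rw [← hTk]
          exact mul_le_mul_of_nonneg_right
            (Real.rpow_le_rpow_of_exponent_le hT (by linarith)) (Real.exp_pos _).le
      _ ≤ Real.Gamma (a * k + b - 1 + 1) :=
          Real.rpow_mul_exp_neg_le_Gamma_add_one (by linarith)
            (by linarith [mul_nonneg ha.le k.cast_nonneg])
      _ = Real.Gamma (a * k + b) := by ring_nf
  have hgeom : Summable fun k : ℕ => Real.exp (T + 1) * (R / (2 * R + 1)) ^ k :=
    (summable_geometric_of_lt_one (div_nonneg hR (by linarith))
      ((div_lt_one (by linarith)).2 (by linarith))).mul_left _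
  refine hgeom.of_nonneg_of_le (fun k => div_nonneg (by positivity)
      (Real.Gamma_pos_of_pos (by positivity)).le) (fun k => ?_)
  rw [div_le_iff₀ (Real.Gamma_pos_of_pos (by positivity)), div_pow]
  calc R ^ k = Real.exp (T + 1) * (R ^ k / (2 * R + 1) ^ k) *
        ((2 * R + 1) ^ k * Real.exp (-(T + 1))) := by
        rw [Real.exp_neg]; field_simp
    _ ≤ _ := by gcongr; exact hGamma k

theorem differentiable_mittagLeffler {a b : ℝ} (ha : 0 < a) (hb : 1 ≤ b) :
    Differentiable ℂ (mittagLeffler a b) := by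
  intro w
  have hdiff : DifferentiableOn ℂ (mittagLeffler a b) (Metric.ball 0 (‖w‖ + 1)) := by
    refine Complex.differentiableOn_tsum_of_summable_norm
      (Real.summable_pow_div_Gamma ha hb (by positivity : 0 ≤ ‖w‖ + 1))
      (fun k => ((differentiable_pow k).div_const _).differentiableOn) Metric.isOpen_ball
      (fun k z hz => ?_)
    rw [norm_div, norm_pow, Complex.norm_real, Real.norm_of_nonneg
      (Real.Gamma_pos_of_pos (by positivity)).le]
    gcongr
    exact (mem_ball_zero_iff.mp hz).le
  exact hdiff.differentiableAt (Metric.isOpen_ball.mem_nhds (by simp))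

section Orthonormal

variable {ι 𝕜 E : Type*} [RCLike 𝕜] [NormedAddCommGroup E] [InnerProductSpace 𝕜 E]
  [CompleteSpace E] {φ : ι → E}

theorem Orthonormal.summable_smul (hφ : Orthonormal 𝕜 φ) {b : ι → 𝕜}
    (hb : Summable fun i => ‖b i‖ ^ 2) : Summable fun i => b i • φ i := by
  simpa [LinearIsometry.toSpanSingleton_apply] using
    (hφ.orthogonalFamily.summable_iff_norm_sq_summable b).2 hb

theorem Orthonormal.norm_tsum_smul_sq (hφ : Orthonormal 𝕜 φ) {b : ι → 𝕜}
    (hb : Summable fun i => ‖b i‖ ^ 2) : ‖∑' i, b i • φ i‖ ^ 2 = ∑' i, ‖b i‖ ^ 2 := by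
  have hpartial (s : Finset ι) : ‖∑ i ∈ s, b i • φ i‖ ^ 2 = ∑ i ∈ s, ‖b i‖ ^ 2 := by
    simpa [LinearIsometry.toSpanSingleton_apply] using hφ.orthogonalFamily.norm_sum b s
  refine tendsto_nhds_unique ?_ hb.hasSum
  simpa only [hpartial] using (hφ.summable_smul hb).hasSum.norm.pow 2

theorem summable_norm_sq_of_norm_le {α : Type*} [SeminormedAddCommGroup α] {b : ι → α}
    {u : ι → ℝ} (hu : Summable fun i => u i ^ 2) (hb : ∀ i, ‖b i‖ ≤ u i) :
    Summable fun i => ‖b i‖ ^ 2 :=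
  hu.of_nonneg_of_le (fun i => by positivity) fun i =>
    pow_le_pow_left₀ (norm_nonneg _) (hb i) 2

theorem Orthonormal.norm_tsum_smul_le (hφ : Orthonormal 𝕜 φ) {b : ι → 𝕜} {u : ι → ℝ}
    (hu : Summable fun i => u i ^ 2) (hb : ∀ i, ‖b i‖ ≤ u i) :
    ‖∑' i, b i • φ i‖ ≤ √(∑' i, u i ^ 2) := by
  have hb2 := summable_norm_sq_of_norm_le hu hb
  rw [← Real.sqrt_sq (norm_nonneg _), hφ.norm_tsum_smul_sq hb2]
  exact Real.sqrt_le_sqrt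
    (hb2.tsum_le_tsum (fun i => pow_le_pow_left₀ (norm_nonneg _) (hb i) 2) hu)

theorem Orthonormal.tendstoUniformlyOn_tsum {α : Type*} (hφ : Orthonormal 𝕜 φ)
    {f : ι → α → 𝕜} {u : ι → ℝ} {s : Set α} (hu : Summable fun i => u i ^ 2)
    (hf : ∀ i, ∀ x ∈ s, ‖f i x‖ ≤ u i) :
    TendstoUniformlyOn (fun t x => ∑ i ∈ t, f i x • φ i) (fun x => ∑' i, f i x • φ i)
      atTop s := by
  rw [Metric.tendstoUniformlyOn_iff]
  intro ε hε
  filter_upwards [(tendsto_order.1 (tendsto_tsum_compl_atTop_zero fun i => u i ^ 2)).2 _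
    (pow_pos hε 2)] with t ht x hx
  have hsum := hφ.summable_smul (summable_norm_sq_of_norm_le hu fun i => hf i x hx)
  rw [dist_eq_norm, ← hsum.sum_add_tsum_subtype_compl t, add_sub_cancel_left]
  calc ‖∑' i : {i // i ∉ t}, f i x • φ i‖ ≤ √(∑' i : {i // i ∉ t}, u i ^ 2) :=
        (hφ.comp _ Subtype.val_injective).norm_tsum_smul_le (hu.subtype _) fun i => hf i x hx
    _ < ε := (Real.sqrt_lt' hε).2 ht

end Orthonormal

theorem Orthonormal.differentiableOn_tsum {ι E : Type*} [NormedAddCommGroup E]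
    [InnerProductSpace ℂ E] [CompleteSpace E] {φ : ι → E} (hφ : Orthonormal ℂ φ)
    {f : ι → ℂ → ℂ} {u : ι → ℝ} {U : Set ℂ} (hu : Summable fun i => u i ^ 2)
    (hf : ∀ i, DifferentiableOn ℂ (f i) U) (hU : IsOpen U)
    (hfu : ∀ i, ∀ z ∈ U, ‖f i z‖ ≤ u i) :
    DifferentiableOn ℂ (fun z => ∑' i, f i z • φ i) U :=
  (hφ.tendstoUniformlyOn_tsum hu hfu).tendstoLocallyUniformlyOn.differentiableOn
    (Eventually.of_forall fun _ => DifferentiableOn.fun_sum fun i _ => (hf i).smul_const _) hU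

theorem Complex.arg_neg_I_mul_cpow_ofReal {z : ℂ} (hz : z ≠ 0) (a : ℝ) :
    arg (-I * z ^ (a : ℂ)) = toIocMod two_pi_pos (-π) (a * arg z - π / 2) := by
  have hexp : -I * z ^ (a : ℂ) = exp (log z * a + (-π / 2) * I) := by
    rw [exp_add, exp_neg_pi_div_two_mul_I, cpow_def_of_ne_zero hz, mul_comm]
  rw [hexp, arg_exp]
  congr 1
  simp [log_im, mul_comm, sub_eq_add_neg, neg_div]

theorem le_abs_toIocMod_of_mem_Icc {μ ψ : ℝ} (h₁ : μ - 2 * π ≤ ψ) (h₂ : ψ ≤ -μ) :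
    μ ≤ |toIocMod two_pi_pos (-π) ψ| := by
  rcases le_or_gt μ 0 with hμ | hμ
  · exact hμ.trans (abs_nonneg _)
  rcases lt_or_ge (-π) ψ with hψ | hψ
  · rw [toIocMod_eq_self two_pi_pos |>.2 ⟨hψ, by linarith⟩, abs_of_neg (by linarith)]
    linarith
  · rw [← toIocMod_add_right, toIocMod_eq_self two_pi_pos |>.2 ⟨by linarith, by linarith⟩,
      abs_of_pos (by linarith)]
    linarith

theorem Complex.le_abs_arg_neg_I_mul_cpow_ofReal {z : ℂ} (hz : z ≠ 0) {a μ : ℝ}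
    (h₁ : μ - 3 * π / 2 ≤ a * arg z) (h₂ : a * arg z ≤ π / 2 - μ) :
    μ ≤ |arg (-I * z ^ (a : ℂ))| := by
  rw [arg_neg_I_mul_cpow_ofReal hz]
  exact le_abs_toIocMod_of_mem_Icc (by linarith) (by linarith)

theorem Complex.setOf_arg_mem_Ioo_subset_slitPlane {L U : ℝ} (hU : U ≤ π) :
    {z : ℂ | z ≠ 0 ∧ L < arg z ∧ arg z < U} ⊆ slitPlane :=
  fun _ ⟨hz0, _, hzU⟩ => mem_slitPlane_iff_arg.2 ⟨(hzU.trans_le hU).ne, hz0⟩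

theorem Complex.isOpen_setOf_arg_mem_Ioo {L U : ℝ} (hU : U ≤ π) :
    IsOpen {z : ℂ | z ≠ 0 ∧ L < arg z ∧ arg z < U} := by
  rw [isOpen_iff_mem_nhds]
  intro z hz
  filter_upwards [(continuousAt_arg (setOf_arg_mem_Ioo_subset_slitPlane hU hz)).eventually_mem
    (isOpen_Ioo.mem_nhds hz.2), eventually_ne_nhds hz.1] with w hw hw0
  exact ⟨hw0, hw⟩

theorem series_converges_bounded_analytic_general
    {H : Type*} [NormedAddCommGroup H] [InnerProductSpace ℂ H] [CompleteSpace H]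
    (a : ℝ) (ha0 : 0 < a)
    (mu : ℝ)
    (C₀ : ℝ) (hC₀ : 0 < C₀)
    (hbound : ∀ lam : ℝ, 0 ≤ lam → ∀ w : ℂ, w ≠ 0 →
      mu ≤ |Complex.arg (-Complex.I * w ^ (a : ℂ))| →
      |Complex.arg (-Complex.I * w ^ (a : ℂ))| ≤ Real.pi →
      ‖mittagLeffler a 1 (-Complex.I * (lam : ℂ) * w ^ (a : ℂ))‖
        ≤ C₀ / (1 + lam * ‖w‖ ^ a))
    (φ : ℕ → H) (hφ : Orthonormal ℂ φ)
    (lam : ℕ → ℝ) (hlam : ∀ n, 0 ≤ lam n)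
    (c : ℕ → ℂ) (hc : Summable fun n => ‖c n‖ ^ 2) :
    (∀ z ∈ {z : ℂ | z ≠ 0 ∧ max (-Real.pi) ((mu - 3 * Real.pi / 2) / a) ≤ Complex.arg z ∧
        Complex.arg z ≤ min Real.pi ((Real.pi / 2 - mu) / a)},
      Summable (fun n : ℕ =>
        (c n * mittagLeffler a 1 (-Complex.I * (lam n : ℂ) * z ^ (a : ℂ))) • φ n) ∧
      ‖∑' n : ℕ, (c n * mittagLeffler a 1 (-Complex.I * (lam n : ℂ) * z ^ (a : ℂ))) • φ n‖
        ≤ C₀ * Real.sqrt (∑' n : ℕ, ‖c n‖ ^ 2)) ∧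
    AnalyticOnNhd ℂ
      (fun z : ℂ =>
        ∑' n : ℕ, (c n * mittagLeffler a 1 (-Complex.I * (lam n : ℂ) * z ^ (a : ℂ))) • φ n)
      {z : ℂ | z ≠ 0 ∧ max (-Real.pi) ((mu - 3 * Real.pi / 2) / a) < Complex.arg z ∧
        Complex.arg z < min Real.pi ((Real.pi / 2 - mu) / a)} := by
  set f : ℕ → ℂ → ℂ := fun n z => c n * mittagLeffler a 1 (-I * (lam n : ℂ) * z ^ (a : ℂ))
  have hfc : ∀ z ∈ {z : ℂ | z ≠ 0 ∧ max (-π) ((mu - 3 * π / 2) / a) ≤ arg z ∧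
      arg z ≤ min π ((π / 2 - mu) / a)}, ∀ n, ‖f n z‖ ≤ C₀ * ‖c n‖ := by
    rintro z ⟨hz, hlo, hhi⟩ n
    have harg : mu ≤ |arg (-I * z ^ (a : ℂ))| := le_abs_arg_neg_I_mul_cpow_ofReal hz
      (by have := (div_le_iff₀ ha0).1 (le_of_max_le_right hlo); linarith)
      (by have := (le_div_iff₀ ha0).1 (le_of_le_min_right hhi); linarith)
    have hE := hbound (lam n) (hlam n) z hz harg (abs_arg_le_pi _)
    rw [norm_mul, mul_comm]
    gcongr
    exact hE.trans (div_le_self hC₀.le (le_add_of_nonneg_right (by have := hlam n; positivity)))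
  have hu : Summable fun n => (C₀ * ‖c n‖) ^ 2 := by
    simpa only [mul_pow] using hc.mul_left (C₀ ^ 2)
  have hsqrt : √(∑' n, (C₀ * ‖c n‖) ^ 2) = C₀ * √(∑' n, ‖c n‖ ^ 2) := by
    simp only [mul_pow, tsum_mul_left, Real.sqrt_mul (sq_nonneg C₀), Real.sqrt_sq hC₀.le]
  refine ⟨fun z hz => ⟨hφ.summable_smul (summable_norm_sq_of_norm_le hu (hfc z hz)),
    (hφ.norm_tsum_smul_le hu (hfc z hz)).trans_eq hsqrt⟩, ?_⟩
  have hopen := isOpen_setOf_arg_mem_Ioo (L := max (-π) ((mu - 3 * π / 2) / a))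
    (min_le_left π ((π / 2 - mu) / a))
  have hML := differentiable_mittagLeffler ha0 le_rfl
  refine (hφ.differentiableOn_tsum hu (fun n z hz => ?_) hopen
    fun n z ⟨hz, hlo, hhi⟩ => hfc z ⟨hz, hlo.le, hhi.le⟩ n).analyticOnNhd hopen
  have hslit := setOf_arg_mem_Ioo_subset_slitPlane (min_le_left _ _) hz
  exact (by fun_prop (disch := exact hslit) : DifferentiableAt ℂ (f n) z).differentiableWithinAt

/-- Given the Mittag-Leffler bound with constant `C₀`, an orthonormal family `(φ_n)` in a
complex Hilbert space, nonnegative reals `(λ_n)` and `ℓ²` coefficients `(c_n)`, the series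
`y(z) = ∑ c_n E_{α,1}(−i λ_n z^α) φ_n` converges on the sector `Σ`, is bounded in norm by
`C₀ (∑ |c_n|²)^{1/2}` there, and is analytic on the open sector. -/
theorem series_converges_bounded_analytic
    {H : Type*} [NormedAddCommGroup H] [InnerProductSpace ℂ H] [CompleteSpace H]
    (a : ℝ) (ha0 : 0 < a) (ha1 : a < 1)
    (mu : ℝ) (hmu1 : Real.pi * a / 2 < mu) (hmu2 : mu < Real.pi * a)
    (C₀ : ℝ) (hC₀ : 0 < C₀)
    (hbound : ∀ lam : ℝ, 0 ≤ lam → ∀ w : ℂ, w ≠ 0 →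
      mu ≤ |Complex.arg (-Complex.I * w ^ (a : ℂ))| →
      |Complex.arg (-Complex.I * w ^ (a : ℂ))| ≤ Real.pi →
      ‖mittagLeffler a 1 (-Complex.I * (lam : ℂ) * w ^ (a : ℂ))‖
        ≤ C₀ / (1 + lam * ‖w‖ ^ a))
    (φ : ℕ → H) (hφ : Orthonormal ℂ φ)
    (lam : ℕ → ℝ) (hlam : ∀ n, 0 ≤ lam n)
    (c : ℕ → ℂ) (hc : Summable fun n => ‖c n‖ ^ 2) :
    (∀ z ∈ {z : ℂ | z ≠ 0 ∧ max (-Real.pi) ((mu - 3 * Real.pi / 2) / a) ≤ Complex.arg z ∧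
        Complex.arg z ≤ min Real.pi ((Real.pi / 2 - mu) / a)},
      Summable (fun n : ℕ =>
        (c n * mittagLeffler a 1 (-Complex.I * (lam n : ℂ) * z ^ (a : ℂ))) • φ n) ∧
      ‖∑' n : ℕ, (c n * mittagLeffler a 1 (-Complex.I * (lam n : ℂ) * z ^ (a : ℂ))) • φ n‖
        ≤ C₀ * Real.sqrt (∑' n : ℕ, ‖c n‖ ^ 2)) ∧
    AnalyticOnNhd ℂ
      (fun z : ℂ =>
        ∑' n : ℕ, (c n * mittagLeffler a 1 (-Complex.I * (lam n : ℂ) * z ^ (a : ℂ))) • φ n)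
      {z : ℂ | z ≠ 0 ∧ max (-Real.pi) ((mu - 3 * Real.pi / 2) / a) < Complex.arg z ∧
        Complex.arg z < min Real.pi ((Real.pi / 2 - mu) / a)} :=
  series_converges_bounded_analytic_general a ha0 mu C₀ hC₀ hbound φ hφ lam hlam c hc
end

section
/- Let H and H' be complex Hilbert spaces and T : H → H' a continuous linear map. Let (u_k)_{k∈ℕ} be pairwise orthogonal vectors in H with Σ_k ‖u_k‖² < ∞, and let (μ_k)_{k∈ℕ} be a strictly increasing sequence of real numbers tending to +∞, so that S(η) = Σ_{k=1}^∞ (η + i μ_k)^{−1} u_k converges in H for every η ∈ ℂ \ {−i μ_k : k ∈ ℕ}. If T(S(η)) = 0 in H' for every η ∈ ℂ \ {−i μ_k : k ∈ ℕ}, then T u_ℓ = 0 for every ℓ ∈ ℕ. -/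
/-! With `η = ε - i μ_ℓ` for real `ε ≠ 0`, the vector `ε S(η)` is `∑ ε / (ε + i (μ_k - μ_ℓ)) u_k`.
Its coefficients are bounded by `1` and tend to `δ_kℓ` as `ε → 0`, so orthogonality (Pythagoras)
and dominated convergence give `ε S(η) → u_ℓ`; as `T (ε S(η)) = 0`, continuity gives `T u_ℓ = 0`. -/

open Filter Topology Complex

section Orthogonal

variable {𝕜 E ι : Type*} [RCLike 𝕜] [NormedAddCommGroup E] [InnerProductSpace 𝕜 E] {u : ι → E}

theorem orthogonalFamily_span_singleton (hu : Pairwise fun j k => inner 𝕜 (u j) (u k) = 0) :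
    OrthogonalFamily 𝕜 (fun k => 𝕜 ∙ u k) (fun k => (𝕜 ∙ u k).subtypeₗᵢ) := by
  intro j k hjk v w
  obtain ⟨a, ha⟩ := Submodule.mem_span_singleton.1 v.2
  obtain ⟨b, hb⟩ := Submodule.mem_span_singleton.1 w.2
  change inner 𝕜 (v : E) (w : E) = 0
  rw [← ha, ← hb, inner_smul_left, inner_smul_right, hu hjk, mul_zero, mul_zero]

theorem Pairwise.inner_smul_eq_zero (hu : Pairwise fun j k => inner 𝕜 (u j) (u k) = 0)
    (a : ι → 𝕜) : Pairwise fun j k => inner 𝕜 (a j • u j) (a k • u k) = 0 := by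
  intro j k hjk
  simp only [inner_smul_left, inner_smul_right, hu hjk, mul_zero]

theorem summable_of_pairwise_inner_eq_zero [CompleteSpace E]
    (hu : Pairwise fun j k => inner 𝕜 (u j) (u k) = 0) (hs : Summable fun k => ‖u k‖ ^ 2) :
    Summable u := by
  simpa using ((orthogonalFamily_span_singleton hu).summable_iff_norm_sq_summable
    fun k => ⟨u k, Submodule.mem_span_singleton_self _⟩).2 (by simpa using hs)

theorem norm_tsum_sq_of_pairwise_inner_eq_zero [CompleteSpace E]
    (hu : Pairwise fun j k => inner 𝕜 (u j) (u k) = 0) (hs : Summable fun k => ‖u k‖ ^ 2) :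
    ‖∑' k, u k‖ ^ 2 = ∑' k, ‖u k‖ ^ 2 := by
  have hpartial : ∀ s : Finset ι, ‖∑ k ∈ s, u k‖ ^ 2 = ∑ k ∈ s, ‖u k‖ ^ 2 := fun s => by
    simpa using (orthogonalFamily_span_singleton hu).norm_sum
      (fun k => ⟨u k, Submodule.mem_span_singleton_self _⟩) s
  have hsum_norm_sq := (summable_of_pairwise_inner_eq_zero hu hs).hasSum.norm.pow 2
  exact tendsto_nhds_unique (hsum_norm_sq.congr hpartial) hs.hasSum

theorem summable_norm_smul_sq_of_norm_le (hs : Summable fun k => ‖u k‖ ^ 2) {a : ι → 𝕜} {C : ℝ}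
    (ha : ∀ k, ‖a k‖ ≤ C) : Summable fun k => ‖a k • u k‖ ^ 2 := by
  refine (hs.mul_left (C ^ 2)).of_nonneg_of_le (fun k => by positivity) fun k => ?_
  rw [norm_smul, mul_pow]
  gcongr
  exact ha k

theorem summable_smul_of_pairwise_inner_eq_zero [CompleteSpace E]
    (hu : Pairwise fun j k => inner 𝕜 (u j) (u k) = 0) (hs : Summable fun k => ‖u k‖ ^ 2)
    {a : ι → 𝕜} {C : ℝ} (ha : ∀ k, ‖a k‖ ≤ C) : Summable fun k => a k • u k :=
  summable_of_pairwise_inner_eq_zero (hu.inner_smul_eq_zero a)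
    (summable_norm_smul_sq_of_norm_le hs ha)

theorem tendsto_tsum_smul_of_pairwise_inner_eq_zero [CompleteSpace E] {α : Type*} {l : Filter α}
    (hu : Pairwise fun j k => inner 𝕜 (u j) (u k) = 0) (hs : Summable fun k => ‖u k‖ ^ 2)
    {a : α → ι → 𝕜} {b : ι → 𝕜} {C : ℝ} (ha : ∀ᶠ x in l, ∀ k, ‖a x k‖ ≤ C)
    (hb : ∀ k, ‖b k‖ ≤ C) (hab : ∀ k, Tendsto (a · k) l (𝓝 (b k))) :
    Tendsto (fun x => ∑' k, a x k • u k) l (𝓝 (∑' k, b k • u k)) := by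
  have hdiff_le : ∀ᶠ x in l, ∀ k, ‖a x k - b k‖ ≤ C + C := ha.mono fun x hx k =>
    (norm_sub_le _ _).trans (add_le_add (hx k) (hb k))
  have hdiff_eq : ∀ᶠ x in l, ‖∑' k, a x k • u k - ∑' k, b k • u k‖ ^ 2
      = ∑' k, ‖(a x k - b k) • u k‖ ^ 2 := ha.mono fun x hx => by
    rw [← (summable_smul_of_pairwise_inner_eq_zero hu hs hx).tsum_sub
      (summable_smul_of_pairwise_inner_eq_zero hu hs hb)]
    simp only [← sub_smul]
    exact norm_tsum_sq_of_pairwise_inner_eq_zero (hu.inner_smul_eq_zero _)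
      (summable_norm_smul_sq_of_norm_le hs fun k => norm_sub_le_of_le (hx k) (hb k))
  have hsq : Tendsto (fun x => ∑' k, ‖(a x k - b k) • u k‖ ^ 2) l (𝓝 0) := by
    rw [← tsum_zero]
    refine tendsto_tsum_of_dominated_convergence (hs.mul_left ((C + C) ^ 2)) (fun k => ?_) ?_
    · simpa [norm_smul, mul_pow] using
        ((((hab k).sub_const (b k)).norm.pow 2).mul_const (‖u k‖ ^ 2))
    · filter_upwards [hdiff_le] with x hx k
      rw [norm_pow, norm_norm, norm_smul, mul_pow]
      gcongr
      exact hx k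
  rw [tendsto_iff_norm_sub_tendsto_zero]
  simpa using ((hsq.congr' (hdiff_eq.mono fun x hx => hx.symm)).sqrt)

end Orthogonal

namespace Complex

theorem norm_ofReal_div_ofReal_add_mul_I_le_one (ε t : ℝ) : ‖(ε : ℂ) / (ε + t * I)‖ ≤ 1 := by
  rw [norm_div, norm_real, Real.norm_eq_abs]
  refine div_le_one_of_le₀ ?_ (norm_nonneg _)
  simpa using abs_re_le_norm ((ε : ℂ) + t * I)

theorem tendsto_ofReal_div_ofReal_add_mul_I {t : ℝ} (ht : t ≠ 0) :
    Tendsto (fun ε : ℝ => (ε : ℂ) / (ε + t * I)) (𝓝 0) (𝓝 0) := by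
  have hden : (((0 : ℝ) : ℂ) + t * I) ≠ 0 := by simpa using ht
  have hcont : ContinuousAt (fun ε : ℝ => (ε : ℂ) / (ε + t * I)) 0 :=
    ContinuousAt.div (by fun_prop) (by fun_prop) hden
  simpa using hcont.tendsto

end Complex

theorem tendsto_tsum_scaled_resolvent_smul {E ι : Type*} [NormedAddCommGroup E]
    [InnerProductSpace ℂ E] [CompleteSpace E] {u : ι → E}
    (hu : Pairwise fun j k => inner ℂ (u j) (u k) = 0) (hs : Summable fun k => ‖u k‖ ^ 2)
    {mu : ι → ℝ} (hmu : Function.Injective mu) (ℓ : ι) :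
    Tendsto (fun ε : ℝ => ∑' k, ((ε : ℂ) / (ε + (mu k - mu ℓ : ℝ) * I)) • u k) (𝓝[≠] 0)
      (𝓝 (u ℓ)) := by
  classical
  have hlim := tendsto_tsum_smul_of_pairwise_inner_eq_zero (l := 𝓝[≠] (0 : ℝ)) hu hs
    (a := fun ε k => (ε : ℂ) / (ε + (mu k - mu ℓ : ℝ) * I))
    (b := fun k => if k = ℓ then 1 else 0) (C := 1)
    (.of_forall fun ε k => norm_ofReal_div_ofReal_add_mul_I_le_one ε _)
    (fun k => by split_ifs <;> simp) fun k => ?_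
  · simpa [ite_smul] using hlim
  rcases eq_or_ne k ℓ with rfl | hk
  · refine tendsto_const_nhds.congr' (eventually_nhdsWithin_of_forall fun ε hε => ?_)
    have : (ε : ℂ) ≠ 0 := ofReal_ne_zero.2 hε
    simp [this]
  · simpa [hk] using (tendsto_ofReal_div_ofReal_add_mul_I
      (sub_ne_zero.2 (hmu.ne hk))).mono_left nhdsWithin_le_nhds

theorem vanishing_resolvent_series_implies_components_general
    {H H' : Type*} [NormedAddCommGroup H] [InnerProductSpace ℂ H] [CompleteSpace H]
    [NormedAddCommGroup H'] [InnerProductSpace ℂ H']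
    (T : H →L[ℂ] H')
    (u : ℕ → H) (hu : Pairwise fun j k => inner ℂ (u j) (u k) = (0 : ℂ))
    (hsum : Summable fun k => ‖u k‖ ^ 2)
    (mu : ℕ → ℝ) (hmono : StrictMono mu)
    (hT : ∀ η : ℂ, (∀ k, η ≠ -Complex.I * mu k) →
      T (∑' k : ℕ, (η + Complex.I * mu k)⁻¹ • u k) = 0) :
    ∀ ℓ : ℕ, T (u ℓ) = 0 := by
  intro ℓ
  have hT_scaled : ∀ ε : ℝ, ε ≠ 0 →
      T (∑' k, ((ε : ℂ) / (ε + (mu k - mu ℓ : ℝ) * I)) • u k) = 0 := fun ε hε => by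
    have hη : ∀ k, (ε - I * mu ℓ : ℂ) ≠ -I * mu k := fun k h => hε (by simpa using congrArg re h)
    have hcoeff : ∀ k, (ε : ℂ) / (ε + (mu k - mu ℓ : ℝ) * I) = ε * (ε - I * mu ℓ + I * mu k)⁻¹ :=
      fun k => by push_cast; ring_nf
    simp only [hcoeff, mul_smul, tsum_const_smul'', map_smul, hT _ hη, smul_zero]
  have hlim := (T.continuous.tendsto _).comp
    (tendsto_tsum_scaled_resolvent_smul hu hsum hmono.injective ℓ)
  exact tendsto_nhds_unique hlim <| tendsto_const_nhds.congr' <|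
    (eventually_nhdsWithin_of_forall hT_scaled).mono fun _ h => h.symm

/-- If `T : H → H'` is a continuous linear map between complex Hilbert spaces vanishing on
`S(η) = ∑ (η + i μ_k)⁻¹ u_k` for every `η` outside the set of poles `{−i μ_k}`, then
`T u_ℓ = 0` for every `ℓ`. -/
theorem vanishing_resolvent_series_implies_components
    {H H' : Type*} [NormedAddCommGroup H] [InnerProductSpace ℂ H] [CompleteSpace H]
    [NormedAddCommGroup H'] [InnerProductSpace ℂ H'] [CompleteSpace H']
    (T : H →L[ℂ] H')
    (u : ℕ → H) (hu : Pairwise fun j k => inner ℂ (u j) (u k) = (0 : ℂ))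
    (hsum : Summable fun k => ‖u k‖ ^ 2)
    (mu : ℕ → ℝ) (hmono : StrictMono mu) (htop : Filter.Tendsto mu Filter.atTop Filter.atTop)
    (hT : ∀ η : ℂ, (∀ k, η ≠ -Complex.I * mu k) →
      T (∑' k : ℕ, (η + Complex.I * mu k)⁻¹ • u k) = 0) :
    ∀ ℓ : ℕ, T (u ℓ) = 0 :=
  vanishing_resolvent_series_implies_components_general T u hu hsum mu hmono hT
end
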